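/- arXiv:2008.00960 — 3 statements merged into one kernel-verified Lean document; each statement's English description precedes it below -/
import Mathlib

section
/- For all integers N ≥ 2 and K ≥ 1, the storage–retrieval tradeoff point (2α₀, 2β₀) = (2K/N, 2·Σ_{i=1}^{K} N^{-i}) is achievable: there exists an (N,K) PIR scheme (for some message entropy L > 0) whose storage cost satisfies α ≤ 2K/N and whose download cost satisfies β ≤ 2·Σ_{i=1}^{K} N^{-i}. (Proposition 1(i), regime-wise 2-approximation, achievability part.) -/
/- Shannon entropy framework for finitely-valued random variables on a finite
probability space, and the definition of an (N,K) private information retrieval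
(PIR) scheme. -/

open scoped Classical
open Finset

/-- `prob p X a` is the probability that the random variable `X` takes the value `a`,
where `p` is the probability mass function on the finite sample space `Ω`. -/
noncomputable def prob {Ω α : Type} [Fintype Ω] (p : Ω → ℝ) (X : Ω → α) (a : α) : ℝ :=
  ∑ ω : Ω, if X ω = a then p ω else 0

/-- Shannon entropy (natural base) of a random variable `X` on a finite sample space. -/
noncomputable def ent {Ω α : Type} [Fintype Ω] (p : Ω → ℝ) (X : Ω → α) : ℝ :=
  ∑ a ∈ Finset.univ.image X, Real.negMulLog (prob p X a)

/-- Conditional Shannon entropy `H(X | Y) = H(X, Y) - H(Y)`. -/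
noncomputable def condEnt {Ω α β : Type} [Fintype Ω] (p : Ω → ℝ) (X : Ω → α) (Y : Ω → β) : ℝ :=
  ent p (fun ω => (X ω, Y ω)) - ent p Y

/-- An `(N, K)` private information retrieval scheme:
`K` mutually independent messages `W` with entropy `L` each, stored contents `S` at `N`
servers (deterministic functions of the messages), a random key `F` independent of the
messages, queries `Q` (deterministic functions of `F`), answers `A` (deterministic
functions of the query and the stored content, with an answer function not depending on
the desired index), correctness and privacy. Messages/servers are indexed `0, …, K-1`
and `0, …, N-1` (paper index `i` corresponds to index `i - 1` here). -/
structure PIRScheme (N K : ℕ) where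
  Ω : Type
  [finΩ : Fintype Ω]
  Msg : Type
  Sto : Type
  Qry : Type
  Ans : Type
  Key : Type
  p : Ω → ℝ
  p_nonneg : ∀ ω, 0 ≤ p ω
  p_sum : ∑ ω : Ω, p ω = 1
  L : ℝ
  L_pos : 0 < L
  W : Fin K → Ω → Msg
  S : Fin N → Ω → Sto
  F : Ω → Key
  Q : Fin K → Fin N → Ω → Qry
  A : Fin K → Fin N → Ω → Ans
  W_indep : ∀ w : Fin K → Msg,
    prob p (fun ω => (fun k => W k ω)) w = ∏ k : Fin K, prob p (W k) (w k)
  W_ent : ∀ k, ent p (W k) = L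
  F_indep : ∀ (f : Key) (w : Fin K → Msg),
    prob p (fun ω => (F ω, fun k => W k ω)) (f, w)
      = prob p F f * prob p (fun ω => (fun k => W k ω)) w
  S_det : ∀ n : Fin N, ∃ g : (Fin K → Msg) → Sto, ∀ ω, S n ω = g (fun k => W k ω)
  Q_det : ∀ (k : Fin K) (n : Fin N), ∃ g : Key → Qry, ∀ ω, Q k n ω = g (F ω)
  A_det : ∀ n : Fin N, ∃ φ : Qry → Sto → Ans, ∀ (k : Fin K) (ω : Ω), A k n ω = φ (Q k n ω) (S n ω)
  correct : ∀ k : Fin K, ∃ g : (Fin N → Ans) → (Fin N → Qry) → Msg,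
    ∀ ω, W k ω = g (fun n => A k n ω) (fun n => Q k n ω)
  privacy : ∀ (n : Fin N) (k k' : Fin K) (q : Qry),
    prob p (Q k n) q = prob p (Q k' n) q

attribute [instance] PIRScheme.finΩ

/-- The set of server (or message) indices `{i : i < m}`, i.e. paper indices `1, …, m`. -/
def finLt (N m : ℕ) : Finset (Fin N) := Finset.univ.filter (fun i => i.val < m)

/-- The set of server (or message) indices `{i : m ≤ i}`, i.e. paper indices `m+1, …, N`. -/
def finGe (N m : ℕ) : Finset (Fin N) := Finset.univ.filter (fun i => m ≤ i.val)

namespace PIRScheme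

variable {N K : ℕ}

/-- Informational normalized storage cost `α = (1/(N L)) ∑ₙ H(Sₙ)`. -/
noncomputable def alpha (s : PIRScheme N K) : ℝ :=
  (1 / (N * s.L)) * ∑ n : Fin N, ent s.p (s.S n)

/-- Informational normalized download cost for desired message `k`:
`(1/(N L)) ∑ₙ H(Aₙ^[k] | Q₁^[k], …, Q_N^[k])`.  The download cost `β` of the scheme is
`betaAt` at the first message. -/
noncomputable def betaAt (s : PIRScheme N K) (k : Fin K) : ℝ :=
  (1 / (N * s.L)) *
    ∑ n : Fin N, condEnt s.p (s.A k n) (fun ω => (fun n' : Fin N => s.Q k n' ω))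

/-- The joint random variable `S_B = (Sₙ : n ∈ B)`. -/
noncomputable def jointS (s : PIRScheme N K) (B : Finset (Fin N)) : s.Ω → (B → s.Sto) :=
  fun ω i => s.S i.1 ω

/-- The joint random variable `A_B^[k] = (Aₙ^[k] : n ∈ B)`. -/
noncomputable def jointA (s : PIRScheme N K) (k : Fin K) (B : Finset (Fin N)) :
    s.Ω → (B → s.Ans) :=
  fun ω i => s.A k i.1 ω

/-- The joint random variable `W_C = (Wₖ : k ∈ C)`. -/
noncomputable def jointW (s : PIRScheme N K) (C : Finset (Fin K)) : s.Ω → (C → s.Msg) :=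
  fun ω i => s.W i.1 ω

/-- A scheme is symmetric if
`H(S_A, A_B^[k] | F, W_C) = H(S_{π(A)}, A_{π(B)}^[π'(k)] | F, W_{π'(C)})` for all
permutations `π` of the servers and `π'` of the messages. -/
def Symmetric (s : PIRScheme N K) : Prop :=
  ∀ (A B : Finset (Fin N)) (C : Finset (Fin K)) (k : Fin K)
    (π : Equiv.Perm (Fin N)) (π' : Equiv.Perm (Fin K)),
    condEnt s.p (fun ω => (s.jointS A ω, s.jointA k B ω)) (fun ω => (s.F ω, s.jointW C ω))
      = condEnt s.p (fun ω => (s.jointS (A.image ⇑π) ω, s.jointA (π' k) (B.image ⇑π) ω))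
          (fun ω => (s.F ω, s.jointW (C.image ⇑π') ω))

end PIRScheme

/-! Two servers suffice. Both store all `K` messages, each a uniformly random element of a
finite ring `R`, and the remaining servers store nothing; the sample space is
`R^K × R^K ∋ (messages, key)` with the uniform distribution. The user sends a uniformly random
key `f ∈ R^K` to server 0 and `f + e_k` to server 1; each answers with the inner product of
its query and its storage, and the difference of the two answers is `W_k`. Each query on its
own is uniform on `R^K`, which gives privacy. Storage is `2K` symbols and download at most
`2` symbols, so `α = 2K/N` and `β ≤ 2/N ≤ 2β₀`. -/

section Entropy

variable {Ω α β : Type} [Fintype Ω] (p : Ω → ℝ)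

lemma prob_nonneg (hp : ∀ ω, 0 ≤ p ω) (X : Ω → α) (a : α) : 0 ≤ prob p X a :=
  Finset.sum_nonneg fun ω _ => by split_ifs <;> simp [hp ω]

lemma prob_eq_zero_of_notMem_image {X : Ω → α} {a : α} (ha : a ∉ Finset.univ.image X) :
    prob p X a = 0 :=
  Finset.sum_eq_zero fun ω _ =>
    if_neg fun (h : X ω = a) => ha (h ▸ Finset.mem_image_of_mem X (Finset.mem_univ ω))

lemma sum_prob_image (hp : ∑ ω, p ω = 1) (X : Ω → α) :
    ∑ a ∈ Finset.univ.image X, prob p X a = 1 := by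
  simp only [prob]
  rw [Finset.sum_comm, ← hp]
  exact Finset.sum_congr rfl fun ω _ => by simp

lemma ent_eq_sum_of_image_subset (X : Ω → α) {t : Finset α} (ht : Finset.univ.image X ⊆ t) :
    ent p X = ∑ a ∈ t, Real.negMulLog (prob p X a) :=
  Finset.sum_subset ht fun a _ ha => by rw [prob_eq_zero_of_notMem_image p ha, Real.negMulLog_zero]

lemma ent_comp_of_injective (X : Ω → α) {f : α → β} (hf : Function.Injective f) :
    ent p (fun ω => f (X ω)) = ent p X := by
  have himage : Finset.univ.image (fun ω => f (X ω)) = (Finset.univ.image X).image f := by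
    rw [Finset.image_image]; rfl
  rw [ent, himage, Finset.sum_image fun a _ b _ h => hf h]
  refine Finset.sum_congr rfl fun a _ => ?_
  simp only [prob, hf.eq_iff]

lemma ent_const (hp : ∑ ω, p ω = 1) (c : α) : ent p (fun _ => c) = 0 := by
  rw [ent_eq_sum_of_image_subset p _ (t := {c}) (by intro; simp [eq_comm]),
    Finset.sum_singleton]
  simp [prob, hp]

lemma condEnt_const (c : α) (Y : Ω → β) : condEnt p (fun _ => c) Y = 0 := by
  rw [condEnt, ent_comp_of_injective p Y (f := fun y => (c, y)) fun _ _ h => (Prod.ext_iff.1 h).2,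
    sub_self]

lemma ent_eq_log_card_of_prob_eq [Fintype α] {X : Ω → α}
    (hX : ∀ a, prob p X a = (Fintype.card α : ℝ)⁻¹) :
    ent p X = Real.log (Fintype.card α) := by
  rw [ent_eq_sum_of_image_subset p X (Finset.subset_univ _)]
  simp only [hX, Finset.sum_const, Finset.card_univ, nsmul_eq_mul, Real.negMulLog, Real.log_inv]
  rcases Nat.eq_zero_or_pos (Fintype.card α) with h | h
  · simp [h]
  · field_simp

lemma Real.sum_negMulLog_le {ι : Type*} (s : Finset ι) {r : ι → ℝ} (hr : ∀ i ∈ s, 0 ≤ r i) :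
    ∑ i ∈ s, Real.negMulLog (r i)
      ≤ Real.negMulLog (∑ i ∈ s, r i) + (∑ i ∈ s, r i) * Real.log s.card := by
  rcases s.eq_empty_or_nonempty with rfl | hs
  · simp
  have hcard : (0 : ℝ) < s.card := by exact_mod_cast hs.card_pos
  have hjensen := Real.concaveOn_negMulLog.le_map_sum (t := s) (w := fun _ => (s.card : ℝ)⁻¹)
    (fun _ _ => by positivity) (by simp [hcard.ne']) hr
  simp only [smul_eq_mul, ← Finset.mul_sum] at hjensen
  rw [mul_comm, Real.negMulLog_mul, Real.negMulLog, Real.log_inv] at hjensen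
  field_simp at hjensen ⊢
  linarith

lemma condEnt_le_log_card [Fintype α] (hp : ∀ ω, 0 ≤ p ω) (hp1 : ∑ ω, p ω = 1)
    (X : Ω → α) (Y : Ω → β) :
    condEnt p X Y ≤ Real.log (Fintype.card α) := by
  set XY := fun ω => (X ω, Y ω)
  have hmarginal : ∀ b, ∑ a, prob p XY (a, b) = prob p Y b := by
    intro b
    simp only [prob, XY, Prod.ext_iff]
    rw [Finset.sum_comm]
    refine Finset.sum_congr rfl fun ω _ => ?_
    by_cases h : Y ω = b <;> simp [h]
  have hjoint : ent p XY
      = ∑ b ∈ Finset.univ.image Y, ∑ a, Real.negMulLog (prob p XY (a, b)) := by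
    rw [ent_eq_sum_of_image_subset p XY (t := Finset.univ ×ˢ Finset.univ.image Y)
      (fun _ => by simp only [XY, Finset.mem_image, Finset.mem_product]; grind),
      Finset.sum_product, Finset.sum_comm]
  have hchain : ent p XY ≤ ent p Y + Real.log (Fintype.card α) := calc
    ent p XY ≤ ∑ b ∈ Finset.univ.image Y,
        (Real.negMulLog (prob p Y b) + prob p Y b * Real.log (Fintype.card α)) := by
      rw [hjoint]
      refine Finset.sum_le_sum fun b _ => ?_
      simpa [hmarginal] using
        Real.sum_negMulLog_le Finset.univ fun a _ => prob_nonneg p hp XY (a, b)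
    _ = ent p Y + Real.log (Fintype.card α) := by
      rw [Finset.sum_add_distrib, ← Finset.sum_mul, sum_prob_image p hp1, one_mul, ent]
  rw [condEnt]
  linarith

end Entropy

section Uniform

noncomputable def unif (Ω : Type) [Fintype Ω] : Ω → ℝ := fun _ => (Fintype.card Ω : ℝ)⁻¹

variable {Ω α β : Type} [Fintype Ω]

lemma unif_nonneg (ω : Ω) : 0 ≤ unif Ω ω := by
  unfold unif; positivity

lemma sum_unif [Nonempty Ω] : ∑ ω, unif Ω ω = 1 := by
  simp [unif]

lemma prob_unif_eq_inv_card [Fintype α] [Fintype β] [Nonempty β] (e : Ω ≃ α × β) {X : Ω → α}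
    (hX : ∀ ω, X ω = (e ω).1) (a : α) :
    prob (unif Ω) X a = (Fintype.card α : ℝ)⁻¹ := by
  simp only [prob, unif, hX]
  rw [e.sum_comp fun x => if x.1 = a then _ else 0, Fintype.sum_prod_type]
  simp [Fintype.card_congr e, Fintype.card_prod]

end Uniform

lemma sum_ite_val_lt_two {N : ℕ} (hN : 2 ≤ N) (c : ℝ) :
    ∑ n : Fin N, (if n.val < 2 then c else 0) = 2 * c := by
  rw [Finset.sum_ite, Finset.sum_const_zero, add_zero, Finset.sum_const, Fin.card_filter_val_lt,
    min_eq_right hN, nsmul_eq_mul]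
  norm_num

namespace TwoServerPIR

section Probabilities

variable {R : Type} [Fintype R] {K : ℕ}

lemma prob_messages [Nonempty R] (w : Fin K → R) :
    prob (unif ((Fin K → R) × (Fin K → R))) (fun ω => ω.1) w
      = (Fintype.card (Fin K → R) : ℝ)⁻¹ :=
  prob_unif_eq_inv_card (Equiv.refl _) (fun _ => rfl) w

lemma prob_message [Nonempty R] (k : Fin K) (b : R) :
    prob (unif ((Fin K → R) × (Fin K → R))) (fun ω => ω.1 k) b = (Fintype.card R : ℝ)⁻¹ :=
  prob_unif_eq_inv_card
    (((Equiv.funSplitAt k R).prodCongr (Equiv.refl _)).trans (Equiv.prodAssoc _ _ _))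
    (fun _ => rfl) b

lemma prob_key [Nonempty R] (f : Fin K → R) :
    prob (unif ((Fin K → R) × (Fin K → R))) (fun ω => ω.2) f = (Fintype.card R : ℝ)⁻¹ ^ K :=
  (prob_unif_eq_inv_card (Equiv.prodComm _ _) (fun _ => rfl) f).trans (by simp)

lemma prob_key_messages (f w : Fin K → R) :
    prob (unif ((Fin K → R) × (Fin K → R))) (fun ω => (ω.2, ω.1)) (f, w)
      = (Fintype.card R : ℝ)⁻¹ ^ K * (Fintype.card R : ℝ)⁻¹ ^ K :=
  (prob_unif_eq_inv_card ((Equiv.prodComm _ _).trans (Equiv.prodPUnit _).symm)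
    (fun _ => rfl) (f, w)).trans (by simp)

end Probabilities

section Protocol

variable {R : Type} [Ring R] {N K : ℕ}

def query (k : Fin K) (n : Fin N) (ω : (Fin K → R) × (Fin K → R)) : Fin K → R :=
  if n.val < 2 then ω.2 + (if n.val = 1 then Pi.single k 1 else 0) else 0

def storage (n : Fin N) (ω : (Fin K → R) × (Fin K → R)) : Fin K → R :=
  if n.val < 2 then ω.1 else 0

lemma prob_query_of_lt_two [Fintype R] (k : Fin K) {n : Fin N} (hn : n.val < 2) (q : Fin K → R) :
    prob (unif ((Fin K → R) × (Fin K → R))) (query k n) q = (Fintype.card R : ℝ)⁻¹ ^ K :=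
  (prob_unif_eq_inv_card ((Equiv.prodComm _ _).trans
    ((Equiv.addRight (if n.val = 1 then Pi.single k 1 else 0)).prodCongr (Equiv.refl _)))
    (fun _ => by simp [query, hn]) q).trans (by simp)

lemma prob_query_eq [Fintype R] (k k' : Fin K) (n : Fin N) (q : Fin K → R) :
    prob (unif ((Fin K → R) × (Fin K → R))) (query k n) q
      = prob (unif ((Fin K → R) × (Fin K → R))) (query k' n) q := by
  by_cases hn : n.val < 2
  · rw [prob_query_of_lt_two k hn, prob_query_of_lt_two k' hn]
  · have hzero (k : Fin K) : query (R := R) k n = fun _ => 0 := by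
      funext ω; simp [query, hn]
    rw [hzero, hzero]

lemma message_eq_answer_sub_answer (hN : 2 ≤ N) (k : Fin K) (ω : (Fin K → R) × (Fin K → R)) :
    ω.1 k = query k (⟨1, hN⟩ : Fin N) ω ⬝ᵥ storage (⟨1, hN⟩ : Fin N) ω
      - query k (⟨0, by omega⟩ : Fin N) ω ⬝ᵥ storage (⟨0, by omega⟩ : Fin N) ω := by
  simp [query, storage, add_dotProduct, single_dotProduct]

end Protocol

noncomputable def scheme (R : Type) [Ring R] [Fintype R] [Nontrivial R] (N K : ℕ) (hN : 2 ≤ N) :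
    PIRScheme N K where
  Ω := (Fin K → R) × (Fin K → R)
  Msg := R
  Sto := Fin K → R
  Qry := Fin K → R
  Ans := R
  Key := Fin K → R
  p := unif _
  p_nonneg := unif_nonneg
  p_sum := sum_unif
  L := Real.log (Fintype.card R)
  L_pos := Real.log_pos (by exact_mod_cast Fintype.one_lt_card)
  W k ω := ω.1 k
  S := storage
  F ω := ω.2
  Q := query
  A k n ω := query k n ω ⬝ᵥ storage n ω
  W_indep w := by
    rw [prob_messages w, Finset.prod_congr rfl fun k _ => prob_message k (w k)]
    simp
  W_ent k := ent_eq_log_card_of_prob_eq _ (prob_message k)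
  F_indep f w := by rw [prob_key_messages, prob_key, prob_messages]; simp
  S_det n := ⟨fun w => if n.val < 2 then w else 0, fun _ => rfl⟩
  Q_det k n := ⟨fun f => query k n (0, f), fun _ => rfl⟩
  A_det n := ⟨fun q s => q ⬝ᵥ s, fun _ _ => rfl⟩
  correct k := ⟨fun a _ => a ⟨1, hN⟩ - a ⟨0, by omega⟩,
    message_eq_answer_sub_answer hN k⟩
  privacy n k k' := prob_query_eq k k' n

variable {R : Type} [Ring R] [Fintype R] {N K : ℕ}

lemma ent_storage (n : Fin N) :
    ent (unif ((Fin K → R) × (Fin K → R))) (storage n)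
      = if n.val < 2 then K * Real.log (Fintype.card R) else 0 := by
  by_cases hn : n.val < 2
  · have hstorage : storage (R := R) (K := K) n = fun ω => ω.1 := by
      funext ω; simp [storage, hn]
    rw [if_pos hn, hstorage, ent_eq_log_card_of_prob_eq _ prob_messages]
    simp [Real.log_pow]
  · have hstorage : storage (R := R) (K := K) n = fun _ => 0 := by
      funext ω; simp [storage, hn]
    rw [if_neg hn, hstorage, ent_const _ sum_unif]

lemma condEnt_answer_le (k : Fin K) (n : Fin N) {β : Type}
    (Y : (Fin K → R) × (Fin K → R) → β) :
    condEnt (unif _) (fun ω => query k n ω ⬝ᵥ storage n ω) Y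
      ≤ if n.val < 2 then Real.log (Fintype.card R) else 0 := by
  by_cases hn : n.val < 2
  · rw [if_pos hn]
    exact condEnt_le_log_card _ unif_nonneg sum_unif _ Y
  · have hanswer : (fun ω => query k n ω ⬝ᵥ storage n ω) = fun _ => (0 : R) := by
      funext ω; simp [storage, hn]
    rw [if_neg hn, hanswer, condEnt_const]

lemma alpha_scheme [Nontrivial R] (hN : 2 ≤ N) : (scheme R N K hN).alpha = 2 * K / N := by
  have hL : 0 < Real.log (Fintype.card R) := (scheme R N K hN).L_pos
  have hN0 : (0 : ℝ) < N := by positivity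
  change 1 / (N * Real.log (Fintype.card R)) * ∑ n : Fin N, ent (unif _) (storage n) = _
  rw [Finset.sum_congr rfl fun n _ => ent_storage n, sum_ite_val_lt_two hN]
  field_simp

lemma betaAt_scheme_le [Nontrivial R] (hN : 2 ≤ N) (k : Fin K) :
    (scheme R N K hN).betaAt k ≤ 2 / N := by
  have hL : 0 < Real.log (Fintype.card R) := (scheme R N K hN).L_pos
  have hN0 : (0 : ℝ) < N := by positivity
  calc (scheme R N K hN).betaAt k
      = 1 / (N * Real.log (Fintype.card R)) * ∑ n : Fin N,
          condEnt (unif _) (fun ω => query k n ω ⬝ᵥ storage n ω)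
            (fun ω (n' : Fin N) => query k n' ω) := rfl
    _ ≤ 1 / (N * Real.log (Fintype.card R)) * (2 * Real.log (Fintype.card R)) := by
        rw [← sum_ite_val_lt_two hN]
        exact mul_le_mul_of_nonneg_left
          (Finset.sum_le_sum fun n _ => condEnt_answer_le k n _) (by positivity)
    _ = 2 / N := by field_simp

end TwoServerPIR

lemma le_sum_Icc_pow {x : ℝ} (hx : 0 ≤ x) {K : ℕ} (hK : 1 ≤ K) :
    x ≤ ∑ i ∈ Finset.Icc 1 K, x ^ i := by
  simpa using Finset.single_le_sum (f := fun i => x ^ i) (fun i _ => by positivity)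
    (Finset.mem_Icc.2 ⟨le_rfl, hK⟩)

/-- Proposition 1(i): the point `(2α₀, 2β₀) = (2K/N, 2·∑_{i=1}^K N^{-i})` is achievable. -/
theorem stmt0 (N K : ℕ) (hN : 2 ≤ N) (hK : 1 ≤ K) :
    ∃ s : PIRScheme N K,
      s.alpha ≤ 2 * K / N ∧
      s.betaAt ⟨0, by omega⟩ ≤ 2 * ∑ i ∈ Finset.Icc 1 K, ((N : ℝ))⁻¹ ^ i := by
  refine ⟨TwoServerPIR.scheme (ZMod 2) N K hN, (TwoServerPIR.alpha_scheme hN).le, ?_⟩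
  calc _ ≤ 2 / (N : ℝ) := TwoServerPIR.betaAt_scheme_le hN _
    _ = 2 * (N : ℝ)⁻¹ := div_eq_mul_inv _ _
    _ ≤ _ := by gcongr; exact le_sum_Icc_pow (by positivity) hK
end

section
/- Lemma 3, inequality (51): for every (N,K) PIR scheme with K ≥ 2 and N ≥ 2, H(A_1^[2], S_{2:N} | F, W_1) ≥ (K−1)·L. -/
/- Shannon entropy framework for finitely-valued random variables on a finite
probability space, and the definition of an (N,K) private information retrieval
(PIR) scheme. -/

open scoped Classical
open Finset

/-!
Write `X_k = (A_1^[k], S_{2:N})`. It is a function of the query `Q_1^[k]`, itself a function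
of `F`, and of the messages; as `F` is independent of the messages, `H(X_k | F, W_C)` is an
average over `F` of a quantity that sees `F` only through `Q_1^[k]`, so by privacy it does
not depend on `k`. Take `k = m ∉ C`: correctness recovers `W_m` from `X_m` and `F`, because
the answers of servers `2, …, N` are computed from `S_{2:N}` and `F`, while `W_m` is
independent of `(F, W_C)`. Hence `H(X_k | F, W_C) = L + H(X_k | F, W_{C ∪ {m}})`, and since
`X_k` is determined by `F` and all messages, `H(X_k | F, W_C) = (K - |C|) L`. Take `C = {1}`.
-/

section Entropy

variable {Ω α β γ κ ι : Type} [Fintype Ω] {p : Ω → ℝ}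

lemma prob_congr {X : Ω → α} {Y : Ω → β} {a : α} {b : β} (h : ∀ ω, X ω = a ↔ Y ω = b) :
    prob p X a = prob p Y b :=
  Finset.sum_congr rfl fun ω _ => by simp only [h ω]

lemma prob_eq_zero {X : Ω → α} {a : α} (h : ∀ ω, X ω ≠ a) : prob p X a = 0 :=
  Finset.sum_eq_zero fun ω _ => if_neg (h ω)

lemma sum_prob_mul {X : Ω → α} {A : Finset α} (hA : ∀ ω, X ω ∈ A) (ψ : α → ℝ) :
    ∑ a ∈ A, prob p X a * ψ a = ∑ ω, p ω * ψ (X ω) := by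
  simp only [prob, Finset.sum_mul, ite_mul, zero_mul]
  rw [Finset.sum_comm]
  exact Finset.sum_congr rfl fun ω _ => by simp [Finset.sum_ite_eq, hA ω]

lemma sum_prob {X : Ω → α} {A : Finset α} (hA : ∀ ω, X ω ∈ A) :
    ∑ a ∈ A, prob p X a = ∑ ω, p ω := by
  simpa using sum_prob_mul (p := p) hA fun _ => 1

lemma prob_comp {Y : Ω → β} {B : Finset β} (hB : ∀ ω, Y ω ∈ B) (g : β → γ) (c : γ) :
    prob p (fun ω => g (Y ω)) c = ∑ b ∈ B with g b = c, prob p Y b := by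
  simp only [prob]
  rw [Finset.sum_comm]
  exact Finset.sum_congr rfl fun ω _ => by
    simp [Finset.sum_ite_eq, hB ω]

lemma prob_pair_comp {X : Ω → α} {Y : Ω → β} {B : Finset β} (hB : ∀ ω, Y ω ∈ B)
    (g : β → γ) (a : α) (c : γ) :
    prob p (fun ω => (X ω, g (Y ω))) (a, c)
      = ∑ b ∈ B with g b = c, prob p (fun ω => (X ω, Y ω)) (a, b) := by
  simp only [prob, Prod.mk.injEq]
  rw [Finset.sum_comm]
  refine Finset.sum_congr rfl fun ω _ => ?_
  by_cases hX : X ω = a <;> simp [hX, Finset.sum_ite_eq, hB ω]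

lemma sum_prob_pair_right {X : Ω → α} {Y : Ω → β} {B : Finset β} (hB : ∀ ω, Y ω ∈ B) (a : α) :
    ∑ b ∈ B, prob p (fun ω => (X ω, Y ω)) (a, b) = prob p X a := by
  simp only [prob, Prod.mk.injEq]
  rw [Finset.sum_comm]
  refine Finset.sum_congr rfl fun ω _ => ?_
  by_cases hX : X ω = a <;> simp [hX, Finset.sum_ite_eq, hB ω]

lemma sum_prob_pair_left {X : Ω → α} {Y : Ω → β} {A : Finset α} (hA : ∀ ω, X ω ∈ A) (b : β) :
    ∑ a ∈ A, prob p (fun ω => (X ω, Y ω)) (a, b) = prob p Y b := by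
  simp only [prob, Prod.mk.injEq]
  rw [Finset.sum_comm]
  refine Finset.sum_congr rfl fun ω _ => ?_
  by_cases hY : Y ω = b <;> simp [hY, Finset.sum_ite_eq, hA ω]

lemma ent_eq_sum_of_mem {X : Ω → α} {A : Finset α} (hA : ∀ ω, X ω ∈ A) :
    ent p X = ∑ a ∈ A, Real.negMulLog (prob p X a) := by
  refine Finset.sum_subset (fun a ha => ?_) fun a _ ha => ?_
  · obtain ⟨ω, -, rfl⟩ := Finset.mem_image.mp ha
    exact hA ω
  · rw [prob_eq_zero fun ω hω => ha (Finset.mem_image.mpr ⟨ω, Finset.mem_univ ω, hω⟩),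
      Real.negMulLog_zero]

lemma ent_congr {X : Ω → α} {Y : Ω → β} (u : α → β) (v : β → α)
    (hu : ∀ ω, Y ω = u (X ω)) (hv : ∀ ω, X ω = v (Y ω)) : ent p X = ent p Y := by
  have hvu : ∀ a ∈ Finset.univ.image X, v (u a) = a := by
    intro a ha
    obtain ⟨ω, -, rfl⟩ := Finset.mem_image.mp ha
    rw [← hu, ← hv]
  have himage : Finset.univ.image Y = (Finset.univ.image X).image u := by
    rw [Finset.image_image]
    exact Finset.image_congr fun ω _ => hu ω
  have hinj : Set.InjOn u (Finset.univ.image X) := fun a ha a' ha' h => by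
    rw [← hvu a ha, h, hvu a' ha']
  rw [ent, ent, himage, Finset.sum_image hinj]
  refine Finset.sum_congr rfl fun a ha => congrArg _ (prob_congr fun ω => ?_)
  constructor
  · rintro rfl; exact hu ω
  · intro h; rw [hv ω, h, hvu a ha]

lemma condEnt_congr_left {X : Ω → α} {X' : Ω → γ} {Y : Ω → β} (u : α → γ) (v : γ → α)
    (hu : ∀ ω, X' ω = u (X ω)) (hv : ∀ ω, X ω = v (X' ω)) :
    condEnt p X Y = condEnt p X' Y := by
  rw [condEnt, condEnt, ent_congr (X := fun ω => (X ω, Y ω)) (Y := fun ω => (X' ω, Y ω))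
    (fun z => (u z.1, z.2)) (fun z => (v z.1, z.2))
    (fun ω => Prod.ext (hu ω) rfl) (fun ω => Prod.ext (hv ω) rfl)]

lemma condEnt_congr_right {X : Ω → α} {Y : Ω → β} {Y' : Ω → γ} (u : β → γ) (v : γ → β)
    (hu : ∀ ω, Y' ω = u (Y ω)) (hv : ∀ ω, Y ω = v (Y' ω)) :
    condEnt p X Y = condEnt p X Y' := by
  rw [condEnt, condEnt, ent_congr u v hu hv, ent_congr (X := fun ω => (X ω, Y ω))
    (Y := fun ω => (X ω, Y' ω)) (fun z => (z.1, u z.2)) (fun z => (z.1, v z.2))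
    (fun ω => Prod.ext rfl (hu ω)) (fun ω => Prod.ext rfl (hv ω))]

lemma condEnt_chain_rule (X : Ω → α) (Y : Ω → β) (Z : Ω → γ) :
    condEnt p (fun ω => (X ω, Y ω)) Z = condEnt p X (fun ω => (Y ω, Z ω)) + condEnt p Y Z := by
  rw [condEnt, condEnt, condEnt, ent_congr (fun z => (z.1.1, z.1.2, z.2))
    (fun z => ((z.1, z.2.1), z.2.2)) (fun _ => rfl) (fun _ => rfl)]
  ring

lemma condEnt_eq_zero_of_eq_comp {X : Ω → α} {Y : Ω → β} (g : β → α)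
    (h : ∀ ω, X ω = g (Y ω)) : condEnt p X Y = 0 := by
  rw [condEnt, ent_congr Prod.snd (fun b => (g b, b)) (fun _ => rfl) (fun ω => by rw [h]),
    sub_self]

def IndepRV (p : Ω → ℝ) (X : Ω → α) (Y : Ω → β) : Prop :=
  ∀ a b, prob p (fun ω => (X ω, Y ω)) (a, b) = prob p X a * prob p Y b

lemma IndepRV.comp_right {X : Ω → α} {Y : Ω → β} (h : IndepRV p X Y) (g : β → γ) :
    IndepRV p X fun ω => g (Y ω) := by
  intro a c
  have hY : ∀ ω, Y ω ∈ Finset.univ.image Y := by simp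
  rw [prob_pair_comp hY, prob_comp hY, Finset.mul_sum]
  exact Finset.sum_congr rfl fun b _ => h a b

lemma IndepRV.of_prob_eq_mul (hsum : ∑ ω, p ω = 1) {X : Ω → α} {Y : Ω → β}
    (d : α → ℝ) (e : β → ℝ) (h : ∀ a b, prob p (fun ω => (X ω, Y ω)) (a, b) = d a * e b) :
    IndepRV p X Y := by
  have hA : ∀ ω, X ω ∈ Finset.univ.image X := by simp
  have hB : ∀ ω, Y ω ∈ Finset.univ.image Y := by simp
  have hX : ∀ a, prob p X a = d a * ∑ b ∈ Finset.univ.image Y, e b := fun a => by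
    simp only [← sum_prob_pair_right hB a, h, Finset.mul_sum]
  have hY : ∀ b, prob p Y b = (∑ a ∈ Finset.univ.image X, d a) * e b := fun b => by
    simp only [← sum_prob_pair_left hA b, h, Finset.sum_mul]
  have hde : (∑ a ∈ Finset.univ.image X, d a) * ∑ b ∈ Finset.univ.image Y, e b = 1 := by
    rw [← hsum, ← sum_prob hA, Finset.sum_mul]
    simp only [hX]
  intro a b
  rw [h, hX, hY]
  linear_combination (-(d a * e b)) * hde

lemma ent_pair_comp_of_indep (hsum : ∑ ω, p ω = 1) {X : Ω → α} {Y : Ω → β}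
    (h : IndepRV p X Y) (Φ : α → β → γ) :
    ent p (fun ω => (X ω, Φ (X ω) (Y ω)))
      = ent p X + ∑ ω, p ω * ent p (fun ω' => Φ (X ω) (Y ω')) := by
  set A := Finset.univ.image X
  set Z := (Finset.univ : Finset (Ω × Ω)).image fun ω => Φ (X ω.1) (Y ω.2)
  have hA : ∀ ω, X ω ∈ A := by simp [A]
  have hZ : ∀ ω ω', Φ (X ω) (Y ω') ∈ Z :=
    fun ω ω' => Finset.mem_image_of_mem _ (Finset.mem_univ (ω, ω'))
  have hprob : ∀ a z, prob p (fun ω => (X ω, Φ (X ω) (Y ω))) (a, z)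
      = prob p X a * prob p (fun ω => Φ a (Y ω)) z := by
    intro a z
    rw [← h.comp_right (Φ a) a z]
    refine prob_congr fun ω => ?_
    simp only [Prod.mk.injEq]
    constructor <;> rintro ⟨rfl, hz⟩ <;> exact ⟨rfl, hz⟩
  have havg := sum_prob_mul (p := p) hA fun a => ent p fun ω' => Φ a (Y ω')
  rw [ent_eq_sum_of_mem fun ω => Finset.mem_product.mpr ⟨hA ω, hZ ω ω⟩, Finset.sum_product,
    ← havg, ent, ← Finset.sum_add_distrib]
  refine Finset.sum_congr rfl fun a ha => ?_
  obtain ⟨ω₀, -, rfl⟩ := Finset.mem_image.mp ha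
  simp only [hprob, Real.negMulLog_mul, Finset.sum_add_distrib, ← Finset.sum_mul,
    ← Finset.mul_sum, sum_prob (hZ ω₀), hsum, one_mul, ← ent_eq_sum_of_mem (hZ ω₀)]

lemma condEnt_eq_ent_of_indep (hsum : ∑ ω, p ω = 1) {X : Ω → α} {Y : Ω → β}
    (h : IndepRV p X Y) : condEnt p X Y = ent p X := by
  rw [condEnt, ent_pair_comp_of_indep hsum h fun _ y => y, ← Finset.sum_mul, hsum, one_mul,
    add_sub_cancel_right]

lemma sum_mul_comp_eq_of_prob_eq {X Y : Ω → α} (h : ∀ a, prob p X a = prob p Y a)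
    (ψ : α → ℝ) : ∑ ω, p ω * ψ (X ω) = ∑ ω, p ω * ψ (Y ω) := by
  have hX : ∀ ω, X ω ∈ Finset.univ.image X ∪ Finset.univ.image Y := by simp
  have hY : ∀ ω, Y ω ∈ Finset.univ.image X ∪ Finset.univ.image Y := by simp
  simp only [← sum_prob_mul hX, ← sum_prob_mul hY, h]

lemma condEnt_comp_eq_of_prob_eq (hsum : ∑ ω, p ω = 1) {F : Ω → κ} {W : Ω → β}
    (hFW : IndepRV p F W) {q q' : κ → ι}
    (hq : ∀ x, prob p (fun ω => q (F ω)) x = prob p (fun ω => q' (F ω)) x)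
    (G : ι → β → α) (T : β → γ) :
    condEnt p (fun ω => G (q (F ω)) (W ω)) (fun ω => (F ω, T (W ω)))
      = condEnt p (fun ω => G (q' (F ω)) (W ω)) (fun ω => (F ω, T (W ω))) := by
  have hent : ∀ r : κ → ι, ent p (fun ω => (G (r (F ω)) (W ω), F ω, T (W ω)))
      = ent p F + ∑ ω, p ω * ent p (fun ω' => (G (r (F ω)) (W ω'), T (W ω'))) := by
    intro r
    rw [← ent_pair_comp_of_indep hsum hFW fun f w => (G (r f) w, T w)]
    exact ent_congr (fun z => (z.2.1, z.1, z.2.2)) (fun z => (z.2.1, z.1, z.2.2))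
      (fun _ => rfl) (fun _ => rfl)
  rw [condEnt, condEnt, hent, hent,
    sum_mul_comp_eq_of_prob_eq hq fun x => ent p fun ω' => (G x (W ω'), T (W ω'))]

end Entropy

namespace PIRScheme

variable {N K : ℕ} (s : PIRScheme N K)

noncomputable def answerStorage (k : Fin K) (n₀ : Fin N) (B : Finset (Fin N)) : s.Ω → s.Ans × (B → s.Sto) :=
  fun ω => (s.A k n₀ ω, s.jointS B ω)

noncomputable def keyMsgs (C : Finset (Fin K)) : s.Ω → s.Key × (C → s.Msg) :=
  fun ω => (s.F ω, s.jointW C ω)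

lemma indepRV_W_keyMsgs {m : Fin K} {C : Finset (Fin K)} (hm : m ∉ C) :
    IndepRV s.p (s.W m) (s.keyMsgs C) := by
  have hrest : IndepRV s.p (s.W m) fun ω => (s.F ω, fun k : {k // k ≠ m} => s.W k ω) := by
    refine .of_prob_eq_mul s.p_sum (prob s.p (s.W m))
      (fun x => prob s.p s.F x.1 * ∏ k : {k // k ≠ m}, prob s.p (s.W k) (x.2 k)) fun a x => ?_
    obtain ⟨f, c⟩ := x
    let w : Fin K → s.Msg := fun k => if h : k = m then a else c ⟨k, h⟩
    calc prob s.p (fun ω => (s.W m ω, s.F ω, fun k : {k // k ≠ m} => s.W k ω)) (a, f, c)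
        = prob s.p (fun ω => (s.F ω, fun k => s.W k ω)) (f, w) := prob_congr fun ω => by
          simp only [Prod.mk.injEq, funext_iff, w]
          constructor
          · rintro ⟨rfl, rfl, hc⟩
            refine ⟨rfl, fun k => ?_⟩
            split_ifs with h
            · rw [h]
            · exact hc ⟨k, h⟩
          · rintro ⟨rfl, hw⟩
            exact ⟨by simpa using hw m, rfl, fun k => by simpa [k.2] using hw k⟩
      _ = _ := by
          have hwc : ∀ k : {k // k ≠ m}, w k = c k := fun k => dif_neg k.2
          rw [s.F_indep, s.W_indep, Fintype.prod_eq_mul_prod_subtype_ne _ m]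
          simp only [hwc, w, dite_true]
          ring
  exact hrest.comp_right fun x => (x.1, fun i : C => x.2 ⟨i, ne_of_mem_of_not_mem i.2 hm⟩)

lemma exists_answerStorage_eq_comp (n₀ : Fin N) (B : Finset (Fin N)) :
    ∃ G : s.Qry → (Fin K → s.Msg) → s.Ans × (B → s.Sto), ∀ k ω,
      s.answerStorage k n₀ B ω = G (s.Q k n₀ ω) fun j => s.W j ω := by
  choose φ hφ using s.A_det
  choose g hg using s.S_det
  refine ⟨fun x w => (φ n₀ x (g n₀ w), fun i => g i w), fun k ω => ?_⟩
  show (s.A k n₀ ω, fun i : B => s.S i ω) = _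
  simp only [hφ n₀ k ω, hg]

lemma exists_W_eq_comp_answerStorage {n₀ : Fin N} {B : Finset (Fin N)}
    (hB : ∀ n, n ≠ n₀ → n ∈ B) (m : Fin K) :
    ∃ g : s.Ans × (B → s.Sto) → s.Key → s.Msg, ∀ ω,
      s.W m ω = g (s.answerStorage m n₀ B ω) (s.F ω) := by
  obtain ⟨dec, hdec⟩ := s.correct m
  choose φ hφ using s.A_det
  choose q hq using s.Q_det
  refine ⟨fun x f => dec (fun n => if h : n = n₀ then x.1 else φ n (q m n f) (x.2 ⟨n, hB n h⟩))
    (fun n => q m n f), fun ω => ?_⟩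
  rw [hdec ω]
  congr 1
  · funext n
    split_ifs with h
    · rw [h]; rfl
    · rw [hφ n m ω, hq m n ω]; rfl
  · exact funext fun n => hq m n ω

lemma condEnt_answerStorage_keyMsgs_univ (k : Fin K) (n₀ : Fin N) (B : Finset (Fin N)) :
    condEnt s.p (s.answerStorage k n₀ B) (s.keyMsgs Finset.univ) = 0 := by
  obtain ⟨G, hG⟩ := s.exists_answerStorage_eq_comp n₀ B
  obtain ⟨q, hq⟩ := s.Q_det k n₀
  exact condEnt_eq_zero_of_eq_comp (fun x => G (q x.1) fun j => x.2 ⟨j, Finset.mem_univ j⟩)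
    fun ω => by rw [hG, hq]; rfl

lemma condEnt_answerStorage_keyMsgs_index_swap (k k' : Fin K) (n₀ : Fin N)
    (B : Finset (Fin N)) (C : Finset (Fin K)) :
    condEnt s.p (s.answerStorage k n₀ B) (s.keyMsgs C)
      = condEnt s.p (s.answerStorage k' n₀ B) (s.keyMsgs C) := by
  obtain ⟨G, hG⟩ := s.exists_answerStorage_eq_comp n₀ B
  obtain ⟨q, hq⟩ := s.Q_det k n₀
  obtain ⟨q', hq'⟩ := s.Q_det k' n₀
  have hpriv (x : s.Qry) :
      prob s.p (fun ω => q (s.F ω)) x = prob s.p (fun ω => q' (s.F ω)) x := by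
    rw [← funext hq, ← funext hq', s.privacy]
  have hX (j : Fin K) (r : s.Key → s.Qry) (hr : ∀ ω, s.Q j n₀ ω = r (s.F ω)) :
      s.answerStorage j n₀ B = fun ω => G (r (s.F ω)) fun i => s.W i ω :=
    funext fun ω => by rw [hG, hr]
  rw [hX k q hq, hX k' q' hq']
  exact condEnt_comp_eq_of_prob_eq s.p_sum s.F_indep hpriv G fun w (i : C) => w i

lemma condEnt_answerStorage_keyMsgs_insert {n₀ : Fin N} {B : Finset (Fin N)}
    (hB : ∀ n, n ≠ n₀ → n ∈ B) (k : Fin K) {m : Fin K} {C : Finset (Fin K)} (hm : m ∉ C) :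
    condEnt s.p (s.answerStorage k n₀ B) (s.keyMsgs C)
      = s.L + condEnt s.p (s.answerStorage k n₀ B) (s.keyMsgs (insert m C)) := by
  rw [s.condEnt_answerStorage_keyMsgs_index_swap k m,
    s.condEnt_answerStorage_keyMsgs_index_swap k m _ _ (insert m C)]
  set X := s.answerStorage m n₀ B
  obtain ⟨g, hg⟩ := s.exists_W_eq_comp_answerStorage hB m
  have hdecode : condEnt s.p (s.W m) (fun ω => (X ω, s.keyMsgs C ω)) = 0 :=
    condEnt_eq_zero_of_eq_comp (fun x => g x.1 x.2.1) hg
  have hfresh : condEnt s.p (s.W m) (s.keyMsgs C) = s.L := by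
    rw [condEnt_eq_ent_of_indep s.p_sum (s.indepRV_W_keyMsgs hm), s.W_ent]
  have hinsert : condEnt s.p X (fun ω => (s.W m ω, s.keyMsgs C ω))
      = condEnt s.p X (s.keyMsgs (insert m C)) := by
    refine condEnt_congr_right
      (fun x => (x.2.1, fun i => if h : i.1 ∈ C then x.2.2 ⟨i, h⟩ else x.1))
      (fun y => (y.2 ⟨m, Finset.mem_insert_self m C⟩,
        y.1, fun i => y.2 ⟨i, Finset.mem_insert_of_mem i.2⟩)) (fun ω => ?_) fun _ => rfl
    refine Prod.ext rfl (funext fun i => ?_)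
    show s.W i ω = if h : i.1 ∈ C then s.W i ω else s.W m ω
    split_ifs with h
    · rfl
    · rw [(Finset.mem_insert.mp i.2).resolve_right h]
  have hswap : condEnt s.p (fun ω => (s.W m ω, X ω)) (s.keyMsgs C)
      = condEnt s.p (fun ω => (X ω, s.W m ω)) (s.keyMsgs C) :=
    condEnt_congr_left Prod.swap Prod.swap (fun _ => rfl) fun _ => rfl
  rw [condEnt_chain_rule (s.W m) X, condEnt_chain_rule X (s.W m), hdecode, hfresh, hinsert] at hswap
  linarith

theorem condEnt_answerStorage_keyMsgs_eq_card_compl_mul {n₀ : Fin N} {B : Finset (Fin N)}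
    (hB : ∀ n, n ≠ n₀ → n ∈ B) (k : Fin K) (C : Finset (Fin K)) :
    condEnt s.p (s.answerStorage k n₀ B) (s.keyMsgs C) = #Cᶜ * s.L := by
  suffices h : ∀ D : Finset (Fin K),
      condEnt s.p (s.answerStorage k n₀ B) (s.keyMsgs Dᶜ) = #D * s.L by
    have hC := h Cᶜ
    rwa [compl_compl] at hC
  intro D
  induction D using Finset.induction_on with
  | empty =>
    rw [Finset.compl_empty, Finset.card_empty, Nat.cast_zero, zero_mul]
    exact s.condEnt_answerStorage_keyMsgs_univ k n₀ B
  | insert m D hm ih =>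
    have hcompl : insert m (insert m D)ᶜ = Dᶜ := by
      ext j
      by_cases hj : j = m <;> simp [hj, hm]
    rw [s.condEnt_answerStorage_keyMsgs_insert hB k (Finset.notMem_compl.mpr
      (Finset.mem_insert_self m D)), hcompl, ih, Finset.card_insert_of_notMem hm]
    push_cast
    ring

lemma condEnt_keyMsgs_singleton {α : Type} (X : s.Ω → α) (m : Fin K) :
    condEnt s.p X (s.keyMsgs {m}) = condEnt s.p X fun ω => (s.F ω, s.W m ω) :=
  condEnt_congr_right (fun x => (x.1, x.2 ⟨m, Finset.mem_singleton_self m⟩))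
    (fun y => (y.1, fun _ => y.2)) (fun _ => rfl) fun ω => Prod.ext rfl (funext fun ⟨j, hj⟩ => by
      obtain rfl := Finset.mem_singleton.mp hj; rfl)

end PIRScheme

/-- Lemma 3, inequality (51): `H(A₁^[2], S_{2:N} | F, W₁) ≥ (K-1)·L`. -/
theorem stmt6 (N K : ℕ) (hN : 2 ≤ N) (hK : 2 ≤ K) (s : PIRScheme N K) :
    condEnt s.p
        (fun ω => (s.A ⟨1, by omega⟩ ⟨0, by omega⟩ ω, s.jointS (finGe N 1) ω))
        (fun ω => (s.F ω, s.W ⟨0, by omega⟩ ω))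
      ≥ ((K : ℝ) - 1) * s.L := by
  have hB : ∀ n : Fin N, n ≠ ⟨0, by omega⟩ → n ∈ finGe N 1 := fun n hn => by
    simp only [finGe, Finset.mem_filter, Finset.mem_univ, true_and]
    exact Nat.one_le_iff_ne_zero.mpr fun h => hn (Fin.ext h)
  have h := s.condEnt_answerStorage_keyMsgs_eq_card_compl_mul hB ⟨1, by omega⟩ {⟨0, by omega⟩}
  rw [s.condEnt_keyMsgs_singleton, Finset.card_compl, Finset.card_singleton, Fintype.card_fin,
    Nat.cast_sub (by omega), Nat.cast_one] at h
  exact h.ge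
end

section
/- Privacy identity (used in the relaxed entropic LP of Proposition 2): for every (N,K) PIR scheme, every k ∈ {1, …, K−1}, every subset A ⊆ {1, …, N} with |A| < N, and every server n ∉ A, one has H(S_A, A_n^[k] | F, W_{1:k}) = H(S_A, A_n^[k+1] | F, W_{1:k}). -/
/- Shannon entropy framework for finitely-valued random variables on a finite
probability space, and the definition of an (N,K) private information retrieval
(PIR) scheme. -/

open scoped Classical
open Finset

section PrivAux
variable {Ω : Type} [Fintype Ω] (p : Ω → ℝ)

lemma prob_eq_zero_of_not_mem {α : Type} (X : Ω → α) {a : α}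
    (ha : a ∉ Finset.univ.image X) : prob p X a = 0 := by
  apply Finset.sum_eq_zero
  intro ω _
  rw [if_neg]
  exact fun h => ha (Finset.mem_image.2 ⟨ω, Finset.mem_univ _, h⟩)

lemma ent_eq_sum_subset {α : Type} (X : Ω → α) {T : Finset α}
    (hT : Finset.univ.image X ⊆ T) :
    ent p X = ∑ a ∈ T, Real.negMulLog (prob p X a) := by
  unfold ent
  apply Finset.sum_subset hT
  intro a _ ha
  rw [prob_eq_zero_of_not_mem p X ha, Real.negMulLog_zero]

lemma prob_comp_s9 {κ Qv : Type} (F : Ω → κ) (g : κ → Qv) (q : Qv) :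
    prob p (fun ω => g (F ω)) q
      = ∑ f ∈ Finset.univ.image F, if g f = q then prob p F f else 0 := by
  symm
  calc ∑ f ∈ Finset.univ.image F, (if g f = q then prob p F f else 0)
      = ∑ f ∈ Finset.univ.image F, ∑ ω : Ω, (if F ω = f ∧ g f = q then p ω else 0) := by
        refine Finset.sum_congr rfl fun f _ => ?_
        unfold prob
        split_ifs with h
        · exact Finset.sum_congr rfl fun ω _ => by simp [h]
        · exact (Finset.sum_eq_zero fun ω _ => by simp [h]).symm
    _ = ∑ ω : Ω, ∑ f ∈ Finset.univ.image F, (if F ω = f ∧ g f = q then p ω else 0) :=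
        Finset.sum_comm
    _ = ∑ ω : Ω, (if g (F ω) = q then p ω else 0) := by
        refine Finset.sum_congr rfl fun ω _ => ?_
        rw [Finset.sum_eq_single_of_mem (F ω)
          (Finset.mem_image_of_mem F (Finset.mem_univ ω))]
        · simp
        · intro f _ hf
          rw [if_neg]
          exact fun h => hf h.1.symm
    _ = prob p (fun ω => g (F ω)) q := rfl

end PrivAux

lemma condEnt_privacy {Ω κ γ Qv α β : Type} [Fintype Ω] (p : Ω → ℝ)
    (F : Ω → κ) (Z : Ω → γ) (q1 q2 : κ → Qv) (Φ : Qv → γ → α) (proj : γ → β)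
    (hind : ∀ f z, prob p (fun ω => (F ω, Z ω)) (f, z) = prob p F f * prob p Z z)
    (hq : ∀ q, prob p (fun ω => q1 (F ω)) q = prob p (fun ω => q2 (F ω)) q) :
    condEnt p (fun ω => Φ (q1 (F ω)) (Z ω)) (fun ω => (F ω, proj (Z ω)))
      = condEnt p (fun ω => Φ (q2 (F ω)) (Z ω)) (fun ω => (F ω, proj (Z ω))) := by
  classical
  set Fs : Finset κ := Finset.univ.image F with hFs
  set Zs : Finset γ := Finset.univ.image Z with hZs
  set Qs : Finset Qv := Fs.image q1 ∪ Fs.image q2 with hQs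
  set Xs : Finset α := (Qs ×ˢ Zs).image (fun pr => Φ pr.1 pr.2) with hXs
  set Ws : Finset β := Zs.image proj with hWs
  set T : Qv → α → β → ℝ :=
    fun q x w => ∑ z ∈ Zs, if proj z = w ∧ Φ q z = x then prob p Z z else 0 with hTdef
  set h : Qv → ℝ := fun q => ∑ x ∈ Xs, ∑ w ∈ Ws, Real.negMulLog (T q x w) with hhdef
  -- probability of the joint variable
  have prob_pair : ∀ (qf : κ → Qv) (x : α) (f : κ) (w : β),
      prob p (fun ω => (Φ (qf (F ω)) (Z ω), (F ω, proj (Z ω)))) (x, (f, w))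
        = prob p F f * T (qf f) x w := by
    intro qf x f w
    have step1 : ∀ ω : Ω,
        (if ((Φ (qf (F ω)) (Z ω), (F ω, proj (Z ω))) : α × κ × β) = (x, (f, w)) then p ω else 0)
          = ∑ z ∈ Zs, if (F ω, Z ω) = (f, z) ∧ proj z = w ∧ Φ (qf f) z = x then p ω else 0 := by
      intro ω
      rw [Finset.sum_eq_single_of_mem (Z ω)
        (Finset.mem_image_of_mem Z (Finset.mem_univ ω))]
      · by_cases hf : F ω = f
        · simp only [Prod.mk.injEq, hf]
          exact if_congr (by tauto) rfl rfl
        · rw [if_neg, if_neg]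
          · exact fun hc => hf (congrArg Prod.fst hc.1)
          · simp only [Prod.mk.injEq]
            exact fun hc => hf hc.2.1
      · intro z _ hne
        rw [if_neg]
        exact fun hc => hne (congrArg Prod.snd hc.1).symm
    have expand : prob p (fun ω => (Φ (qf (F ω)) (Z ω), (F ω, proj (Z ω)))) (x, (f, w))
        = ∑ ω : Ω, (if ((Φ (qf (F ω)) (Z ω), (F ω, proj (Z ω))) : α × κ × β) = (x, (f, w)) then p ω else 0) := by
      unfold prob
      refine Finset.sum_congr rfl fun ω _ => ?_
      by_cases hc : ((Φ (qf (F ω)) (Z ω), (F ω, proj (Z ω))) : α × κ × β) = (x, (f, w)) <;>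
        simp [hc]
    rw [expand]
    calc ∑ ω : Ω, (if ((Φ (qf (F ω)) (Z ω), (F ω, proj (Z ω))) : α × κ × β) = (x, (f, w)) then p ω else 0)
        = ∑ ω : Ω, ∑ z ∈ Zs, (if (F ω, Z ω) = (f, z) ∧ proj z = w ∧ Φ (qf f) z = x then p ω else 0) :=
          Finset.sum_congr rfl fun ω _ => step1 ω
      _ = ∑ z ∈ Zs, ∑ ω : Ω, (if (F ω, Z ω) = (f, z) ∧ proj z = w ∧ Φ (qf f) z = x then p ω else 0) :=
          Finset.sum_comm
      _ = ∑ z ∈ Zs, (if proj z = w ∧ Φ (qf f) z = x then prob p F f * prob p Z z else 0) := by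
          refine Finset.sum_congr rfl fun z _ => ?_
          by_cases hC : proj z = w ∧ Φ (qf f) z = x
          · rw [if_pos hC, ← hind f z]
            unfold prob
            refine Finset.sum_congr rfl fun ω _ => ?_
            by_cases hzz : (F ω, Z ω) = (f, z) <;> simp [hzz, hC]
          · rw [if_neg hC]
            exact Finset.sum_eq_zero fun ω _ => if_neg fun hcon => hC hcon.2
      _ = prob p F f * T (qf f) x w := by
          rw [hTdef, Finset.mul_sum]
          refine Finset.sum_congr rfl fun z _ => ?_
          split_ifs <;> simp
  -- total mass of T
  have Tsum : ∀ q ∈ Qs, (∑ x ∈ Xs, ∑ w ∈ Ws, T q x w) = ∑ z ∈ Zs, prob p Z z := by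
    intro q hqQ
    have swap : (∑ x ∈ Xs, ∑ w ∈ Ws, T q x w)
        = ∑ z ∈ Zs, ∑ x ∈ Xs, ∑ w ∈ Ws, (if proj z = w ∧ Φ q z = x then prob p Z z else 0) := by
      have e1 : ∀ x ∈ Xs, (∑ w ∈ Ws, T q x w)
          = ∑ z ∈ Zs, ∑ w ∈ Ws, (if proj z = w ∧ Φ q z = x then prob p Z z else 0) :=
        fun x _ => Finset.sum_comm
      rw [Finset.sum_congr rfl e1]
      exact Finset.sum_comm
    rw [swap]
    refine Finset.sum_congr rfl fun z hz => ?_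
    have hx : Φ q z ∈ Xs := Finset.mem_image.2 ⟨(q, z), Finset.mem_product.2 ⟨hqQ, hz⟩, rfl⟩
    have hw : proj z ∈ Ws := Finset.mem_image_of_mem proj hz
    have inner : ∀ x, (∑ w ∈ Ws, if proj z = w ∧ Φ q z = x then prob p Z z else 0)
        = if Φ q z = x then prob p Z z else 0 := by
      intro x
      by_cases hxx : Φ q z = x
      · simp only [hxx, and_true]
        rw [Finset.sum_ite_eq Ws (proj z) fun _ => prob p Z z]
        simp [hw]
      · simp [hxx]
    rw [Finset.sum_congr rfl fun x _ => inner x,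
        Finset.sum_ite_eq Xs (Φ q z) fun _ => prob p Z z, if_pos hx]
  -- main entropy computation
  have ent_comp : ∀ qf : κ → Qv, (∀ ω : Ω, qf (F ω) ∈ Qs) →
      ent p (fun ω => (Φ (qf (F ω)) (Z ω), (F ω, proj (Z ω))))
        = (∑ q ∈ Qs, prob p (fun ω => qf (F ω)) q * h q)
          + (∑ z ∈ Zs, prob p Z z) * ∑ f1 ∈ Fs, Real.negMulLog (prob p F f1) := by
    intro qf hqf
    have hmemQ : ∀ f1 ∈ Fs, qf f1 ∈ Qs := by
      intro f1 hf1
      obtain ⟨ω, -, rfl⟩ := Finset.mem_image.1 hf1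
      exact hqf ω
    rw [ent_eq_sum_subset p (fun ω => (Φ (qf (F ω)) (Z ω), (F ω, proj (Z ω))))
      (T := Xs ×ˢ Fs ×ˢ Ws) ?sub]
    case sub =>
      intro a ha
      simp only [Finset.mem_image, Finset.mem_univ, true_and] at ha
      obtain ⟨ω, rfl⟩ := ha
      refine Finset.mem_product.2 ⟨?_, Finset.mem_product.2 ⟨?_, ?_⟩⟩
      · exact Finset.mem_image.2 ⟨(qf (F ω), Z ω),
          Finset.mem_product.2 ⟨hqf ω, Finset.mem_image_of_mem Z (Finset.mem_univ ω)⟩, rfl⟩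
      · exact Finset.mem_image_of_mem F (Finset.mem_univ ω)
      · exact Finset.mem_image.2 ⟨Z ω, Finset.mem_image_of_mem Z (Finset.mem_univ ω), rfl⟩
    simp only [Finset.sum_product]
    have e1 : (∑ x ∈ Xs, ∑ f1 ∈ Fs, ∑ w ∈ Ws,
          Real.negMulLog (prob p (fun ω => (Φ (qf (F ω)) (Z ω), (F ω, proj (Z ω)))) (x, (f1, w))))
        = ∑ x ∈ Xs, ∑ f1 ∈ Fs, ∑ w ∈ Ws,
          (prob p F f1 * Real.negMulLog (T (qf f1) x w)
            + T (qf f1) x w * Real.negMulLog (prob p F f1)) := by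
      refine Finset.sum_congr rfl fun x _ => Finset.sum_congr rfl fun f1 _ =>
        Finset.sum_congr rfl fun w _ => ?_
      rw [prob_pair qf x f1 w, Real.negMulLog_mul]
      ring
    have esplit : (∑ x ∈ Xs, ∑ f1 ∈ Fs, ∑ w ∈ Ws,
          (prob p F f1 * Real.negMulLog (T (qf f1) x w)
            + T (qf f1) x w * Real.negMulLog (prob p F f1)))
        = (∑ x ∈ Xs, ∑ f1 ∈ Fs, ∑ w ∈ Ws, prob p F f1 * Real.negMulLog (T (qf f1) x w))
          + (∑ x ∈ Xs, ∑ f1 ∈ Fs, ∑ w ∈ Ws, T (qf f1) x w * Real.negMulLog (prob p F f1)) := by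
      simp only [Finset.sum_add_distrib]
    have key1 : (∑ x ∈ Xs, ∑ f1 ∈ Fs, ∑ w ∈ Ws, prob p F f1 * Real.negMulLog (T (qf f1) x w))
        = ∑ q ∈ Qs, prob p (fun ω => qf (F ω)) q * h q := by
      have step : (∑ x ∈ Xs, ∑ f1 ∈ Fs, ∑ w ∈ Ws, prob p F f1 * Real.negMulLog (T (qf f1) x w))
          = ∑ f1 ∈ Fs, prob p F f1 * h (qf f1) := by
        rw [Finset.sum_comm]
        refine Finset.sum_congr rfl fun f1 _ => ?_
        rw [hhdef]
        simp only [Finset.mul_sum]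
      rw [step]
      calc ∑ f1 ∈ Fs, prob p F f1 * h (qf f1)
          = ∑ f1 ∈ Fs, ∑ q ∈ Qs, (if qf f1 = q then prob p F f1 * h q else 0) := by
            refine Finset.sum_congr rfl fun f1 hf1 => ?_
            rw [Finset.sum_ite_eq Qs (qf f1) fun q => prob p F f1 * h q, if_pos (hmemQ f1 hf1)]
        _ = ∑ q ∈ Qs, ∑ f1 ∈ Fs, (if qf f1 = q then prob p F f1 * h q else 0) := Finset.sum_comm
        _ = ∑ q ∈ Qs, prob p (fun ω => qf (F ω)) q * h q := by
            refine Finset.sum_congr rfl fun q _ => ?_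
            rw [prob_comp_s9 p F qf q, Finset.sum_mul]
            exact Finset.sum_congr rfl fun f1 _ => by rw [ite_mul, zero_mul]
    have key2 : (∑ x ∈ Xs, ∑ f1 ∈ Fs, ∑ w ∈ Ws, T (qf f1) x w * Real.negMulLog (prob p F f1))
        = (∑ z ∈ Zs, prob p Z z) * ∑ f1 ∈ Fs, Real.negMulLog (prob p F f1) := by
      rw [Finset.sum_comm]
      rw [Finset.mul_sum]
      refine Finset.sum_congr rfl fun f1 hf1 => ?_
      rw [← Tsum (qf f1) (hmemQ f1 hf1), Finset.sum_mul]
      exact Finset.sum_congr rfl fun x _ => (Finset.sum_mul _ _ _).symm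
    rw [e1, esplit, key1, key2]
  have m1 : ∀ ω : Ω, q1 (F ω) ∈ Qs := fun ω =>
    Finset.mem_union_left _ (Finset.mem_image_of_mem q1 (Finset.mem_image_of_mem F (Finset.mem_univ ω)))
  have m2 : ∀ ω : Ω, q2 (F ω) ∈ Qs := fun ω =>
    Finset.mem_union_right _ (Finset.mem_image_of_mem q2 (Finset.mem_image_of_mem F (Finset.mem_univ ω)))
  unfold condEnt
  rw [ent_comp q1 m1, ent_comp q2 m2]
  simp only [hq]

/-- Privacy identity: for `k ∈ {1,…,K-1}` (paper index; message `k` is index `k - 1`),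
`A ⊆ {1,…,N}` with `|A| < N`, and `n ∉ A`,
`H(S_A, A_n^[k] | F, W_{1:k}) = H(S_A, A_n^[k+1] | F, W_{1:k})`. -/
theorem stmt9 (N K : ℕ) (s : PIRScheme N K) (k : ℕ) (hk1 : 1 ≤ k) (hk2 : k + 1 ≤ K)
    (A : Finset (Fin N)) (hA : A.card < N) (n : Fin N) (hn : n ∉ A) :
    condEnt s.p
        (fun ω => (s.jointS A ω, s.A ⟨k - 1, by omega⟩ n ω))
        (fun ω => (s.F ω, s.jointW (finLt K k) ω))
      = condEnt s.p
          (fun ω => (s.jointS A ω, s.A ⟨k, by omega⟩ n ω))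
          (fun ω => (s.F ω, s.jointW (finLt K k) ω)) := by
  classical
  obtain ⟨φ, hφ⟩ := s.A_det n
  obtain ⟨g1, hg1⟩ := s.Q_det ⟨k - 1, by omega⟩ n
  obtain ⟨g2, hg2⟩ := s.Q_det ⟨k, by omega⟩ n
  choose g hg using s.S_det
  have key := condEnt_privacy s.p s.F (fun ω => (fun j => s.W j ω)) g1 g2
      (fun q w => ((fun i : {x : Fin N // x ∈ A} => g i.1 w), φ q (g n w)))
      (fun w => (fun i : {x : Fin K // x ∈ finLt K k} => w i.1))
      (fun f w => s.F_indep f w)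
      (fun q => by
        have h1 : (fun ω => g1 (s.F ω)) = s.Q ⟨k - 1, by omega⟩ n :=
          funext fun ω => (hg1 ω).symm
        have h2 : (fun ω => g2 (s.F ω)) = s.Q ⟨k, by omega⟩ n :=
          funext fun ω => (hg2 ω).symm
        rw [h1, h2]
        exact s.privacy n _ _ q)
  have eX1 : (fun ω => (s.jointS A ω, s.A ⟨k - 1, by omega⟩ n ω))
      = fun ω => ((fun i : {x : Fin N // x ∈ A} => g i.1 (fun j => s.W j ω)),
          φ (g1 (s.F ω)) (g n (fun j => s.W j ω))) := by
    funext ω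
    refine congrArg₂ Prod.mk (funext fun i => hg i.1 ω) ?_
    rw [hφ _ ω]
    exact congr (congrArg φ (hg1 ω)) (hg n ω)
  have eX2 : (fun ω => (s.jointS A ω, s.A ⟨k, by omega⟩ n ω))
      = fun ω => ((fun i : {x : Fin N // x ∈ A} => g i.1 (fun j => s.W j ω)),
          φ (g2 (s.F ω)) (g n (fun j => s.W j ω))) := by
    funext ω
    refine congrArg₂ Prod.mk (funext fun i => hg i.1 ω) ?_
    rw [hφ _ ω]
    exact congr (congrArg φ (hg2 ω)) (hg n ω)
  rw [eX1, eX2]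
  exact key
end
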